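/- arXiv:1904.11004 — 2 statements merged into one kernel-verified Lean document; each statement's English description precedes it below -/
import Mathlib

section
/- Let 1 ≤ n ≤ d be integers, μ a Radon measure on ℝ^d, and B a ball intersecting supp μ. Then α_μ(B) ≤ α_{μ,1}(B) ≤ α_{μ,2}(B). -/
/-!
For `ψ ∈ Lip₁(B)` we have `φ_B ψ = ψ`, so `ψ` integrates the same against `μ` and `φ_B μ`, and
against `a_{B,L} H^n|_L` and `a_{B,L} φ_B H^n|_L`. For any coupling `π` of the last two measures,
`|∫ ψ(y) - ψ(z) dπ| ≤ ∫ |y - z| dπ`; hence `F_B ≤ W₁`, and `α_μ(B) ≤ α_{μ,1}(B)` by choosing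
`c = a_{B,L}`. The constant `a_{B,L}` equalises the two masses, so couplings exist: the denominator
is positive because `H^n` is a Haar measure on the `n`-dimensional direction of `L`.

Both measures are carried by `3B` and have mass at most `μ(3B)`, so every coupling has bounded
cost and Hölder's inequality gives `W_p ≤ (mass)^{1/p - 1/q} W_q` for `p ≤ q`; this is exactly the
normalisation in `α_{μ,p}`, so `α_{μ,p}(B) ≤ α_{μ,q}(B)`.
-/

open MeasureTheory Metric Set

noncomputable section

abbrev Euc (d : ℕ) : Type := EuclideanSpace ℝ (Fin d)

/-- An affine `n`-plane: a nonempty affine subspace whose direction has dimension `n`. -/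
def IsAffinePlane {d : ℕ} (n : ℕ) (L : AffineSubspace ℝ (Euc d)) : Prop :=
  (L : Set (Euc d)).Nonempty ∧ Module.finrank ℝ L.direction = n

/-- The support of a measure. -/
def measureSupport {d : ℕ} (μ : Measure (Euc d)) : Set (Euc d) :=
  { x | ∀ r > 0, 0 < μ (ball x r) }

/-- The quantity inside the infimum defining `β_{μ,p}(x,r)`, for a given plane `L`. -/
noncomputable def betaVal {d : ℕ} (p : ℝ) (μ : Measure (Euc d)) (x : Euc d) (r : ℝ)
    (L : AffineSubspace ℝ (Euc d)) : ℝ :=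
  ((μ (ball x (3 * r))).toReal⁻¹ *
    ∫ y in ball x r, (Metric.infDist y (L : Set (Euc d)) / r) ^ p ∂μ) ^ (1 / p)

/-- The coefficient `β_{μ,p}(x,r)`: the infimum is over affine `n`-planes meeting `B(x,r)`. -/
noncomputable def betaCoef {d : ℕ} (n : ℕ) (p : ℝ) (μ : Measure (Euc d)) (x : Euc d)
    (r : ℝ) : ℝ :=
  sInf { b | ∃ L : AffineSubspace ℝ (Euc d), IsAffinePlane n L ∧
    ((L : Set (Euc d)) ∩ ball x r).Nonempty ∧ b = betaVal p μ x r L }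

/-- `Lip₁(B)`: 1-Lipschitz functions supported inside `B`. -/
def Lip1 {d : ℕ} (B : Set (Euc d)) : Set (Euc d → ℝ) :=
  { φ | LipschitzWith 1 φ ∧ tsupport φ ⊆ B }

/-- `F_B(μ,ν) = sup { |∫φ dμ − ∫φ dν| : φ ∈ Lip₁(B) }`. -/
noncomputable def Fdist {d : ℕ} (B : Set (Euc d)) (μ ν : Measure (Euc d)) : ℝ :=
  sSup { t | ∃ φ ∈ Lip1 B, t = |(∫ x, φ x ∂μ) - ∫ x, φ x ∂ν| }

/-- The flat measure `c · H^n|_L`. -/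
noncomputable def flatMeasure {d : ℕ} (n : ℕ) (c : ℝ) (L : AffineSubspace ℝ (Euc d)) :
    Measure (Euc d) :=
  ENNReal.ofReal c • (μH[(n : ℝ)]).restrict (L : Set (Euc d))

/-- The quantity inside the infimum defining `α_μ(x,r)`, for a given `c ≥ 0` and plane `L`. -/
noncomputable def alphaVal {d : ℕ} (n : ℕ) (μ : Measure (Euc d)) (x : Euc d) (r : ℝ)
    (c : ℝ) (L : AffineSubspace ℝ (Euc d)) : ℝ :=
  Fdist (ball x r) μ (flatMeasure n c L) / (r * (μ (ball x (3 * r))).toReal)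

/-- The coefficient `α_μ(x,r)`. -/
noncomputable def alphaCoef {d : ℕ} (n : ℕ) (μ : Measure (Euc d)) (x : Euc d) (r : ℝ) : ℝ :=
  sInf { a | ∃ c : ℝ, 0 ≤ c ∧ ∃ L : AffineSubspace ℝ (Euc d), IsAffinePlane n L ∧
    a = alphaVal n μ x r c L }

/-- The Wasserstein distance `W_p(σ,ν)`: infimum of `(∫ |x−y|^p dπ)^{1/p}` over all
transport plans `π` with marginals `σ` and `ν`. -/
noncomputable def Wasserstein {d : ℕ} (p : ℝ) (σ ν : Measure (Euc d)) : ℝ :=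
  sInf { w | ∃ π : Measure (Euc d × Euc d),
    π.map Prod.fst = σ ∧ π.map Prod.snd = ν ∧
    w = (∫ z, dist z.1 z.2 ^ p ∂π) ^ (1 / p) }

/-- The properties of the fixed radial bump function `φ` used in the definition of
`α_{μ,p}`. -/
def IsBumpFn {d : ℕ} (φ : Euc d → ℝ) : Prop :=
  (∃ g : ℝ → ℝ, ∀ x, φ x = g ‖x‖) ∧
  (∃ K : NNReal, LipschitzWith K φ) ∧
  (∀ x, φ x ∈ Icc (0 : ℝ) 1) ∧
  (∀ x ∈ ball (0 : Euc d) 2, φ x = 1) ∧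
  Function.support φ ⊆ ball (0 : Euc d) 3 ∧
  ∃ c > (0 : ℝ), ∀ x ∈ ball (0 : Euc d) 3,
    c⁻¹ * Metric.infDist x (sphere (0 : Euc d) 3) ^ 2 ≤ φ x ∧
    φ x ≤ c * Metric.infDist x (sphere (0 : Euc d) 3) ^ 2 ∧
    ‖fderiv ℝ φ x‖ ≤ c * Metric.infDist x (sphere (0 : Euc d) 3)

/-- `φ_B(y) = φ((y − x)/r)` for `B = B(x,r)`. -/
noncomputable def phiB {d : ℕ} (φ : Euc d → ℝ) (x : Euc d) (r : ℝ) (y : Euc d) : ℝ :=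
  φ (r⁻¹ • (y - x))

/-- The quantity inside the infimum defining `α_{μ,p}(x,r)`, for a given plane `L`:
`(1/(r μ(3B)^{1/p})) W_p(φ_B μ, a_{B,L} φ_B H^n|_L)`. -/
noncomputable def alphaPVal {d : ℕ} (n : ℕ) (p : ℝ) (φ : Euc d → ℝ) (μ : Measure (Euc d))
    (x : Euc d) (r : ℝ) (L : AffineSubspace ℝ (Euc d)) : ℝ :=
  (r * (μ (ball x (3 * r))).toReal ^ (1 / p))⁻¹ *
    Wasserstein p
      (μ.withDensity fun y => ENNReal.ofReal (phiB φ x r y))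
      (((μH[(n : ℝ)]).restrict (L : Set (Euc d))).withDensity fun y =>
        ENNReal.ofReal
          (((∫ z, phiB φ x r z ∂μ) /
              ∫ z, phiB φ x r z ∂((μH[(n : ℝ)]).restrict (L : Set (Euc d)))) *
            phiB φ x r y))

/-- The coefficient `α_{μ,p}(x,r)`: infimum over affine `n`-planes meeting `B(x,r)`. -/
noncomputable def alphaP {d : ℕ} (n : ℕ) (p : ℝ) (φ : Euc d → ℝ) (μ : Measure (Euc d))
    (x : Euc d) (r : ℝ) : ℝ :=
  sInf { a | ∃ L : AffineSubspace ℝ (Euc d), IsAffinePlane n L ∧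
    ((L : Set (Euc d)) ∩ ball x r).Nonempty ∧ a = alphaPVal n p φ μ x r L }

open ENNReal

section Coupling

variable {E : Type*} [MeasurableSpace E]

theorem measure_univ_eq_of_map_fst_eq {π : Measure (E × E)} {σ : Measure E}
    (h : π.map Prod.fst = σ) : π univ = σ univ := by
  rw [← h, Measure.map_apply measurable_fst MeasurableSet.univ, preimage_univ]

theorem isFiniteMeasure_of_map_fst_eq {π : Measure (E × E)} {σ : Measure E} [IsFiniteMeasure σ]
    (h : π.map Prod.fst = σ) : IsFiniteMeasure π :=
  ⟨(measure_univ_eq_of_map_fst_eq h).trans_lt (measure_lt_top _ _)⟩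

theorem exists_map_fst_eq_and_map_snd_eq {σ ν : Measure E} [IsFiniteMeasure σ]
    [IsFiniteMeasure ν] (h : σ univ = ν univ) :
    ∃ π : Measure (E × E), π.map Prod.fst = σ ∧ π.map Prod.snd = ν := by
  rcases eq_or_ne (σ univ) 0 with h0 | h0
  · refine ⟨0, ?_, ?_⟩
    · simp [Measure.measure_univ_eq_zero.1 h0]
    · simp [Measure.measure_univ_eq_zero.1 (h ▸ h0)]
  · have hσ : (σ univ)⁻¹ * σ univ = 1 := ENNReal.inv_mul_cancel h0 (measure_ne_top _ _)
    refine ⟨(σ univ)⁻¹ • σ.prod ν, ?_, ?_⟩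
    · rw [Measure.map_smul, Measure.map_fst_prod, ← h, smul_smul, hσ, one_smul]
    · rw [Measure.map_smul, Measure.map_snd_prod, smul_smul, hσ, one_smul]

theorem abs_integral_map_fst_sub_integral_map_snd_le [PseudoMetricSpace E]
    {π : Measure (E × E)} {ψ : E → ℝ} (hψ : LipschitzWith 1 ψ)
    (h₁ : Integrable ψ (π.map Prod.fst)) (h₂ : Integrable ψ (π.map Prod.snd))
    (hdist : Integrable (fun z : E × E => dist z.1 z.2) π) :
    |∫ y, ψ y ∂π.map Prod.fst - ∫ y, ψ y ∂π.map Prod.snd| ≤ ∫ z, dist z.1 z.2 ∂π := by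
  have h₁' : Integrable (fun z : E × E => ψ z.1) π := h₁.comp_measurable measurable_fst
  have h₂' : Integrable (fun z : E × E => ψ z.2) π := h₂.comp_measurable measurable_snd
  rw [integral_map measurable_fst.aemeasurable h₁.1, integral_map measurable_snd.aemeasurable h₂.1,
    ← integral_sub h₁' h₂']
  refine (abs_integral_le_integral_abs).trans (integral_mono (h₁'.sub h₂').abs hdist fun z => ?_)
  simpa [Real.dist_eq] using hψ.dist_le_mul z.1 z.2

end Coupling

theorem integral_rpow_one_div_le_mul {α : Type*} [MeasurableSpace α] {π : Measure α}
    [IsFiniteMeasure π] {f : α → ℝ} (hf₀ : 0 ≤ f) {p q : ℝ} (hp : 0 < p) (hpq : p ≤ q)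
    (hf : MemLp f (ENNReal.ofReal q) π) :
    (∫ a, f a ^ p ∂π) ^ (1 / p) ≤
      (π univ).toReal ^ (1 / p - 1 / q) * (∫ a, f a ^ q ∂π) ^ (1 / q) := by
  have hq : 0 < q := hp.trans_le hpq
  have hpq' : ENNReal.ofReal p ≤ ENNReal.ofReal q := ENNReal.ofReal_le_ofReal hpq
  have key := eLpNorm_le_eLpNorm_mul_rpow_measure_univ hpq' hf.1 (μ := π)
  rw [(hf.mono_exponent hpq').eLpNorm_eq_integral_rpow_norm (by simpa using hp) ofReal_ne_top,
    hf.eLpNorm_eq_integral_rpow_norm (by simpa using hq) ofReal_ne_top,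
    ENNReal.toReal_ofReal hp.le, ENNReal.toReal_ofReal hq.le,
    ENNReal.ofReal_le_iff_le_toReal (mul_ne_top ofReal_ne_top (rpow_ne_top_of_nonneg
      (sub_nonneg.2 (one_div_le_one_div_of_le hp hpq)) (measure_ne_top _ _))),
    ENNReal.toReal_mul, ENNReal.toReal_ofReal (by positivity), ← ENNReal.toReal_rpow] at key
  simpa only [Real.norm_of_nonneg (hf₀ _), one_div, mul_comm] using key

section Wasserstein

variable {d : ℕ}

theorem Wasserstein_nonneg (p : ℝ) (σ ν : Measure (Euc d)) : 0 ≤ Wasserstein p σ ν :=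
  Real.sInf_nonneg <| by
    rintro w ⟨π, -, -, rfl⟩
    exact Real.rpow_nonneg (integral_nonneg fun z => Real.rpow_nonneg dist_nonneg _) _

theorem Wasserstein_le_of_map_eq {p : ℝ} {σ ν : Measure (Euc d)} {π : Measure (Euc d × Euc d)}
    (h₁ : π.map Prod.fst = σ) (h₂ : π.map Prod.snd = ν) :
    Wasserstein p σ ν ≤ (∫ z, dist z.1 z.2 ^ p ∂π) ^ (1 / p) := by
  refine csInf_le ⟨0, ?_⟩ ⟨π, h₁, h₂, rfl⟩
  rintro w ⟨π, -, -, rfl⟩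
  exact Real.rpow_nonneg (integral_nonneg fun z => Real.rpow_nonneg dist_nonneg _) _

theorem Wasserstein_eq_zero_of_not_exists {p : ℝ} {σ ν : Measure (Euc d)}
    (h : ¬∃ π : Measure (Euc d × Euc d), π.map Prod.fst = σ ∧ π.map Prod.snd = ν) :
    Wasserstein p σ ν = 0 := by
  rw [Wasserstein, ← Real.sInf_empty]
  congr
  exact Set.eq_empty_of_forall_notMem (by rintro w ⟨π, h₁, h₂, -⟩; exact h ⟨π, h₁, h₂⟩)

theorem Wasserstein_le_mul_Wasserstein {σ ν : Measure (Euc d)} [IsFiniteMeasure σ] {p q : ℝ}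
    (hp : 0 < p) (hpq : p ≤ q)
    (hmem : ∀ π : Measure (Euc d × Euc d), π.map Prod.fst = σ → π.map Prod.snd = ν →
      MemLp (fun z => dist z.1 z.2) (ENNReal.ofReal q) π) :
    Wasserstein p σ ν ≤ (σ univ).toReal ^ (1 / p - 1 / q) * Wasserstein q σ ν := by
  by_cases hπ : ∃ π : Measure (Euc d × Euc d), π.map Prod.fst = σ ∧ π.map Prod.snd = ν
  swap
  · simp [Wasserstein_eq_zero_of_not_exists hπ]
  obtain ⟨π₀, h₀₁, h₀₂⟩ := hπ
  conv_rhs => unfold Wasserstein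
  rw [← smul_eq_mul, ← Real.sInf_smul_of_nonneg (by positivity)]
  refine le_csInf ⟨_, _, ⟨π₀, h₀₁, h₀₂, rfl⟩, rfl⟩ ?_
  rintro _ ⟨_, ⟨π, h₁, h₂, rfl⟩, rfl⟩
  have := isFiniteMeasure_of_map_fst_eq h₁
  rw [← measure_univ_eq_of_map_fst_eq h₁]
  exact (Wasserstein_le_of_map_eq h₁ h₂).trans
    (integral_rpow_one_div_le_mul (fun z => dist_nonneg) hp hpq (hmem π h₁ h₂))

theorem memLp_dist_of_ae_mem_ball {σ ν : Measure (Euc d)} [IsFiniteMeasure σ] {c : Euc d}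
    {R : ℝ} (hσ : ∀ᵐ y ∂σ, y ∈ ball c R) (hν : ∀ᵐ y ∂ν, y ∈ ball c R)
    {π : Measure (Euc d × Euc d)} (h₁ : π.map Prod.fst = σ) (h₂ : π.map Prod.snd = ν)
    (p : ℝ≥0∞) : MemLp (fun z => dist z.1 z.2) p π := by
  have := isFiniteMeasure_of_map_fst_eq h₁
  refine MemLp.of_bound (continuous_fst.dist continuous_snd).aestronglyMeasurable (2 * R) ?_
  filter_upwards [ae_of_ae_map measurable_fst.aemeasurable (h₁ ▸ hσ),
    ae_of_ae_map measurable_snd.aemeasurable (h₂ ▸ hν)] with z hz₁ hz₂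
  rw [Real.norm_of_nonneg dist_nonneg]
  linarith [dist_triangle_right z.1 z.2 c, mem_ball.1 hz₁, mem_ball.1 hz₂]

theorem Fdist_le_Wasserstein_one {B : Set (Euc d)} {μ μ' σ ν : Measure (Euc d)}
    (hπ : ∃ π : Measure (Euc d × Euc d), π.map Prod.fst = σ ∧ π.map Prod.snd = ν)
    (hdist : ∀ π : Measure (Euc d × Euc d), π.map Prod.fst = σ → π.map Prod.snd = ν →
      Integrable (fun z => dist z.1 z.2) π)
    (hσ : ∀ ψ ∈ Lip1 B, Integrable ψ σ ∧ ∫ y, ψ y ∂μ = ∫ y, ψ y ∂σ)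
    (hν : ∀ ψ ∈ Lip1 B, Integrable ψ ν ∧ ∫ y, ψ y ∂μ' = ∫ y, ψ y ∂ν) :
    Fdist B μ μ' ≤ Wasserstein 1 σ ν := by
  obtain ⟨π₀, h₀₁, h₀₂⟩ := hπ
  refine le_csInf ⟨_, π₀, h₀₁, h₀₂, rfl⟩ ?_
  rintro _ ⟨π, h₁, h₂, rfl⟩
  simp only [Real.rpow_one, div_one]
  refine Real.sSup_le ?_ (integral_nonneg fun z => dist_nonneg)
  rintro _ ⟨ψ, hψ, rfl⟩
  obtain ⟨hψσ, hμσ⟩ := hσ ψ hψ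
  obtain ⟨hψν, hμν⟩ := hν ψ hψ
  rw [hμσ, hμν, ← h₁, ← h₂]
  exact abs_integral_map_fst_sub_integral_map_snd_le hψ.1 (h₁ ▸ hψσ) (h₂ ▸ hψν) (hdist π h₁ h₂)

end Wasserstein

section Plane

variable {d n : ℕ} {L : AffineSubspace ℝ (Euc d)}

theorem IsAffinePlane.mk' (hL : IsAffinePlane n L) (y : Euc d) :
    IsAffinePlane n (AffineSubspace.mk' y L.direction) :=
  ⟨⟨y, AffineSubspace.self_mem_mk' y _⟩, by rw [AffineSubspace.direction_mk']; exact hL.2⟩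

theorem IsAffinePlane.exists_isometry_range_eq (hL : IsAffinePlane n L) :
    ∃ f : L.direction → Euc d, Isometry f ∧ range f = L := by
  obtain ⟨y, hy⟩ := hL.1
  refine ⟨fun v => (v : Euc d) + y, Isometry.of_dist_eq fun u v => by simp [dist_eq_norm], ?_⟩
  ext z
  refine ⟨?_, fun hz => ⟨⟨z - y, (AffineSubspace.vsub_right_mem_direction_iff_mem hy z).2 hz⟩,
    sub_add_cancel z y⟩⟩
  rintro ⟨v, rfl⟩
  exact AffineSubspace.vadd_mem_of_mem_direction v.2 hy

theorem IsAffinePlane.hausdorffMeasure_inter_eq_preimage (hL : IsAffinePlane n L)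
    {f : L.direction → Euc d} (hf : Isometry f) (hfL : range f = L) (s : Set (Euc d)) :
    μH[(n : ℝ)] ((L : Set (Euc d)) ∩ s) = μH[(Module.finrank ℝ L.direction : ℝ)] (f ⁻¹' s) := by
  rw [← hfL, ← image_preimage_eq_range_inter, hf.hausdorffMeasure_image (Or.inl (by positivity)),
    hL.2]

theorem IsAffinePlane.hausdorffMeasure_inter_pos (hL : IsAffinePlane n L) {s : Set (Euc d)}
    (hs : IsOpen s) (hLs : ((L : Set (Euc d)) ∩ s).Nonempty) :
    0 < μH[(n : ℝ)] ((L : Set (Euc d)) ∩ s) := by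
  obtain ⟨f, hf, hfL⟩ := hL.exists_isometry_range_eq
  rw [hL.hausdorffMeasure_inter_eq_preimage hf hfL]
  obtain ⟨_, ⟨v, rfl⟩, hv⟩ := hfL ▸ hLs
  -- `μH[finrank]` is an additive Haar measure on the direction of `L`
  exact (hs.preimage hf.continuous).measure_pos _ ⟨v, hv⟩

theorem IsAffinePlane.hausdorffMeasure_inter_lt_top (hL : IsAffinePlane n L) {s : Set (Euc d)}
    (hs : Bornology.IsBounded s) : μH[(n : ℝ)] ((L : Set (Euc d)) ∩ s) < ∞ := by
  obtain ⟨f, hf, hfL⟩ := hL.exists_isometry_range_eq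
  rw [hL.hausdorffMeasure_inter_eq_preimage hf hfL]
  exact (hf.antilipschitz.isBounded_preimage hs).measure_lt_top

theorem IsAffinePlane.isLocallyFiniteMeasure (hL : IsAffinePlane n L) :
    IsLocallyFiniteMeasure ((μH[(n : ℝ)]).restrict (L : Set (Euc d))) :=
  ⟨fun z => ⟨ball z 1, ball_mem_nhds z one_pos, by
    rw [Measure.restrict_apply measurableSet_ball, inter_comm]
    exact hL.hausdorffMeasure_inter_lt_top isBounded_ball⟩⟩

end Plane

section Bump

variable {d : ℕ} {φ : Euc d → ℝ} {x : Euc d} {r : ℝ}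

theorem smul_sub_mem_ball_zero_iff (hr : 0 < r) {y : Euc d} {k : ℝ} :
    r⁻¹ • (y - x) ∈ ball (0 : Euc d) k ↔ y ∈ ball x (k * r) := by
  rw [mem_ball_zero_iff, norm_smul, norm_inv, Real.norm_of_nonneg hr.le, ← dist_eq_norm,
    inv_mul_lt_iff₀ hr, mem_ball, mul_comm]

theorem IsBumpFn.continuous_phiB (hφ : IsBumpFn φ) : Continuous (phiB φ x r) :=
  let ⟨_, hK⟩ := hφ.2.1
  hK.continuous.comp (by fun_prop)

theorem IsBumpFn.phiB_nonneg (hφ : IsBumpFn φ) (y : Euc d) : 0 ≤ phiB φ x r y :=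
  (hφ.2.2.1 _).1

theorem IsBumpFn.phiB_le_one (hφ : IsBumpFn φ) (y : Euc d) : phiB φ x r y ≤ 1 :=
  (hφ.2.2.1 _).2

theorem IsBumpFn.phiB_eq_one (hφ : IsBumpFn φ) (hr : 0 < r) {y : Euc d}
    (hy : y ∈ ball x (2 * r)) : phiB φ x r y = 1 :=
  hφ.2.2.2.1 _ ((smul_sub_mem_ball_zero_iff hr).2 hy)

theorem IsBumpFn.support_phiB_subset (hφ : IsBumpFn φ) (hr : 0 < r) :
    Function.support (phiB φ x r) ⊆ ball x (3 * r) :=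
  fun _ hy => (smul_sub_mem_ball_zero_iff hr).1 (hφ.2.2.2.2.1 hy)

theorem IsBumpFn.hasCompactSupport_phiB (hφ : IsBumpFn φ) (hr : 0 < r) :
    HasCompactSupport (phiB φ x r) :=
  HasCompactSupport.intro (isCompact_closedBall x (3 * r)) fun _ hy =>
    Function.notMem_support.1 fun h => hy (ball_subset_closedBall (hφ.support_phiB_subset hr h))

theorem IsBumpFn.integrable_phiB (hφ : IsBumpFn φ) (hr : 0 < r) (ρ : Measure (Euc d))
    [IsLocallyFiniteMeasure ρ] : Integrable (phiB φ x r) ρ :=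
  hφ.continuous_phiB.integrable_of_hasCompactSupport (hφ.hasCompactSupport_phiB hr)

theorem IsBumpFn.phiB_mul_eq_self (hφ : IsBumpFn φ) (hr : 0 < r) {ψ : Euc d → ℝ}
    (hψ : tsupport ψ ⊆ ball x r) (y : Euc d) : phiB φ x r y * ψ y = ψ y := by
  by_cases h : ψ y = 0
  · simp [h]
  · rw [hφ.phiB_eq_one hr (ball_subset_ball (by linarith) (hψ (subset_tsupport _ h))), one_mul]

end Bump

section Density

variable {α : Type*} [MeasurableSpace α] {ρ : Measure α} {f : α → ℝ}

theorem integral_withDensity_ofReal (hf : Measurable f) (hf₀ : 0 ≤ f) (g : α → ℝ) :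
    ∫ y, g y ∂ρ.withDensity (fun y => ENNReal.ofReal (f y)) = ∫ y, f y * g y ∂ρ := by
  rw [integral_withDensity_eq_integral_toReal_smul hf.ennreal_ofReal
    (ae_of_all _ fun _ => ofReal_lt_top)]
  simp only [ENNReal.toReal_ofReal (hf₀ _), smul_eq_mul]

theorem withDensity_ofReal_univ (hf : Integrable f ρ) (hf₀ : 0 ≤ f) :
    ρ.withDensity (fun y => ENNReal.ofReal (f y)) univ = ENNReal.ofReal (∫ y, f y ∂ρ) := by
  rw [withDensity_apply _ MeasurableSet.univ, Measure.restrict_univ,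
    ofReal_integral_eq_lintegral_ofReal hf (ae_of_all _ hf₀)]

theorem ae_withDensity_ofReal_mem_support (hf : Measurable f) :
    ∀ᵐ y ∂ρ.withDensity (fun y => ENNReal.ofReal (f y)), y ∈ Function.support f :=
  (ae_withDensity_iff hf.ennreal_ofReal).2 (ae_of_all _ fun y hy h => hy (by simp [h]))

end Density

section Alpha

variable {n d : ℕ} {φ : Euc d → ℝ} {μ ρ : Measure (Euc d)} {x : Euc d} {r : ℝ}
  {L : AffineSubspace ℝ (Euc d)}

theorem integrable_of_mem_Lip1 {ψ : Euc d → ℝ} (hψ : ψ ∈ Lip1 (ball x r)) [IsFiniteMeasure ρ] :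
    Integrable ψ ρ :=
  hψ.1.continuous.integrable_of_hasCompactSupport <|
    (isCompact_closedBall x r).of_isClosed_subset (isClosed_tsupport ψ)
      (hψ.2.trans ball_subset_closedBall)

/-- The constant `a_{B,L}`. -/
def planeCoef (n : ℕ) (φ : Euc d → ℝ) (μ : Measure (Euc d)) (x : Euc d) (r : ℝ)
    (L : AffineSubspace ℝ (Euc d)) : ℝ :=
  (∫ z, phiB φ x r z ∂μ) / ∫ z, phiB φ x r z ∂(μH[(n : ℝ)]).restrict (L : Set (Euc d))

/-- `φ_B ρ`. -/
def bumpMeasure (φ : Euc d → ℝ) (x : Euc d) (r : ℝ) (ρ : Measure (Euc d)) : Measure (Euc d) :=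
  ρ.withDensity fun y => ENNReal.ofReal (phiB φ x r y)

/-- `a_{B,L} φ_B H^n|_L`. -/
def flatBumpMeasure (n : ℕ) (φ : Euc d → ℝ) (μ : Measure (Euc d)) (x : Euc d) (r : ℝ)
    (L : AffineSubspace ℝ (Euc d)) : Measure (Euc d) :=
  ((μH[(n : ℝ)]).restrict (L : Set (Euc d))).withDensity fun y =>
    ENNReal.ofReal (planeCoef n φ μ x r L * phiB φ x r y)

theorem alphaPVal_eq (p : ℝ) : alphaPVal n p φ μ x r L =
    (r * (μ (ball x (3 * r))).toReal ^ (1 / p))⁻¹ *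
      Wasserstein p (bumpMeasure φ x r μ) (flatBumpMeasure n φ μ x r L) :=
  rfl

theorem planeCoef_nonneg (hφ : IsBumpFn φ) : 0 ≤ planeCoef n φ μ x r L :=
  div_nonneg (integral_nonneg hφ.phiB_nonneg) (integral_nonneg hφ.phiB_nonneg)

theorem isFiniteMeasure_bumpMeasure (hφ : IsBumpFn φ) (hr : 0 < r) [IsLocallyFiniteMeasure ρ] :
    IsFiniteMeasure (bumpMeasure φ x r ρ) :=
  isFiniteMeasure_withDensity_ofReal (hφ.integrable_phiB hr ρ).2

theorem bumpMeasure_univ_le (hφ : IsBumpFn φ) (hr : 0 < r) :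
    bumpMeasure φ x r ρ univ ≤ ρ (ball x (3 * r)) := by
  rw [bumpMeasure, withDensity_apply _ MeasurableSet.univ, Measure.restrict_univ,
    ← lintegral_indicator_one measurableSet_ball]
  refine lintegral_mono fun y => ?_
  by_cases hy : y ∈ ball x (3 * r)
  · simpa [hy] using hφ.phiB_le_one y
  · simp [hy, Function.notMem_support.1 fun h => hy (hφ.support_phiB_subset hr h)]

theorem ae_mem_ball_bumpMeasure (hφ : IsBumpFn φ) (hr : 0 < r) :
    ∀ᵐ y ∂bumpMeasure φ x r ρ, y ∈ ball x (3 * r) :=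
  (ae_withDensity_ofReal_mem_support hφ.continuous_phiB.measurable).mono fun _ hy =>
    hφ.support_phiB_subset hr hy

theorem ae_mem_ball_flatBumpMeasure (hφ : IsBumpFn φ) (hr : 0 < r) :
    ∀ᵐ y ∂flatBumpMeasure n φ μ x r L, y ∈ ball x (3 * r) :=
  (ae_withDensity_ofReal_mem_support (hφ.continuous_phiB.const_mul _).measurable).mono
    fun _ hy => hφ.support_phiB_subset hr (Function.support_mul_subset_right _ _ hy)

theorem integral_bumpMeasure (hφ : IsBumpFn φ) (hr : 0 < r) {ψ : Euc d → ℝ}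
    (hψ : ψ ∈ Lip1 (ball x r)) :
    ∫ y, ψ y ∂bumpMeasure φ x r ρ = ∫ y, ψ y ∂ρ := by
  rw [bumpMeasure, integral_withDensity_ofReal hφ.continuous_phiB.measurable hφ.phiB_nonneg]
  simp only [hφ.phiB_mul_eq_self hr hψ.2]

theorem integral_flatBumpMeasure (hφ : IsBumpFn φ) (hr : 0 < r) {ψ : Euc d → ℝ}
    (hψ : ψ ∈ Lip1 (ball x r)) :
    ∫ y, ψ y ∂flatBumpMeasure n φ μ x r L = ∫ y, ψ y ∂flatMeasure n (planeCoef n φ μ x r L) L := by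
  rw [flatBumpMeasure, integral_withDensity_ofReal (hφ.continuous_phiB.const_mul _).measurable
    (fun y => mul_nonneg (planeCoef_nonneg hφ) (hφ.phiB_nonneg y)), flatMeasure,
    integral_smul_measure, ENNReal.toReal_ofReal (planeCoef_nonneg hφ), smul_eq_mul,
    ← integral_const_mul]
  simp only [mul_assoc, hφ.phiB_mul_eq_self hr hψ.2]

theorem flatBumpMeasure_univ (hφ : IsBumpFn φ) (hr : 0 < r) [IsLocallyFiniteMeasure μ]
    (hL : IsAffinePlane n L) (hLB : ((L : Set (Euc d)) ∩ ball x r).Nonempty) :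
    flatBumpMeasure n φ μ x r L univ = bumpMeasure φ x r μ univ := by
  have := hL.isLocallyFiniteMeasure
  have hpos : 0 < ∫ z, phiB φ x r z ∂(μH[(n : ℝ)]).restrict (L : Set (Euc d)) := by
    rw [integral_pos_iff_support_of_nonneg hφ.phiB_nonneg (hφ.integrable_phiB hr _)]
    refine (hL.hausdorffMeasure_inter_pos isOpen_ball hLB).trans_le ?_
    rw [inter_comm, ← Measure.restrict_apply measurableSet_ball]
    exact measure_mono fun y hy => by
      simp [hφ.phiB_eq_one hr (ball_subset_ball (by linarith) hy)]
  rw [flatBumpMeasure, bumpMeasure,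
    withDensity_ofReal_univ ((hφ.integrable_phiB hr _).const_mul _)
      (fun y => mul_nonneg (planeCoef_nonneg hφ) (hφ.phiB_nonneg y)),
    withDensity_ofReal_univ (hφ.integrable_phiB hr _) hφ.phiB_nonneg, integral_const_mul,
    planeCoef, div_mul_cancel₀ _ hpos.ne']

theorem Fdist_nonneg (B : Set (Euc d)) (μ ν : Measure (Euc d)) : 0 ≤ Fdist B μ ν :=
  Real.sSup_nonneg <| by
    rintro _ ⟨ψ, -, rfl⟩
    exact abs_nonneg _

theorem alphaVal_nonneg (hr : 0 < r) (c : ℝ) (L : AffineSubspace ℝ (Euc d)) :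
    0 ≤ alphaVal n μ x r c L :=
  div_nonneg (Fdist_nonneg _ _ _) (mul_nonneg hr.le ENNReal.toReal_nonneg)

theorem alphaPVal_nonneg (hr : 0 < r) (p : ℝ) (L : AffineSubspace ℝ (Euc d)) :
    0 ≤ alphaPVal n p φ μ x r L :=
  mul_nonneg (inv_nonneg.2 (mul_nonneg hr.le (Real.rpow_nonneg ENNReal.toReal_nonneg _)))
    (Wasserstein_nonneg _ _ _)

theorem alphaVal_planeCoef_le_alphaPVal_one (hφ : IsBumpFn φ) (hr : 0 < r)
    [IsLocallyFiniteMeasure μ] (hL : IsAffinePlane n L)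
    (hLB : ((L : Set (Euc d)) ∩ ball x r).Nonempty) :
    alphaVal n μ x r (planeCoef n φ μ x r L) L ≤ alphaPVal n 1 φ μ x r L := by
  have := isFiniteMeasure_bumpMeasure hφ hr (x := x) (ρ := μ)
  have hmass := flatBumpMeasure_univ hφ hr (μ := μ) hL hLB
  have : IsFiniteMeasure (flatBumpMeasure n φ μ x r L) := ⟨hmass.trans_lt (measure_lt_top _ _)⟩
  have hF : Fdist (ball x r) μ (flatMeasure n (planeCoef n φ μ x r L) L) ≤
      Wasserstein 1 (bumpMeasure φ x r μ) (flatBumpMeasure n φ μ x r L) :=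
    Fdist_le_Wasserstein_one (exists_map_fst_eq_and_map_snd_eq hmass.symm)
      (fun π h₁ h₂ => memLp_one_iff_integrable.1 <| memLp_dist_of_ae_mem_ball
        (ae_mem_ball_bumpMeasure hφ hr) (ae_mem_ball_flatBumpMeasure hφ hr) h₁ h₂ 1)
      (fun ψ hψ => ⟨integrable_of_mem_Lip1 hψ, (integral_bumpMeasure hφ hr hψ).symm⟩)
      (fun ψ hψ => ⟨integrable_of_mem_Lip1 hψ, (integral_flatBumpMeasure hφ hr hψ).symm⟩)
  rw [alphaVal, alphaPVal_eq, div_one, Real.rpow_one, div_eq_inv_mul]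
  exact mul_le_mul_of_nonneg_left hF (by positivity)

theorem alphaPVal_le_alphaPVal (hφ : IsBumpFn φ) (hr : 0 < r) [IsLocallyFiniteMeasure μ]
    {p q : ℝ} (hp : 0 < p) (hpq : p ≤ q) (L : AffineSubspace ℝ (Euc d)) :
    alphaPVal n p φ μ x r L ≤ alphaPVal n q φ μ x r L := by
  have := isFiniteMeasure_bumpMeasure hφ hr (x := x) (ρ := μ)
  have hW := Wasserstein_le_mul_Wasserstein (σ := bumpMeasure φ x r μ)
    (ν := flatBumpMeasure n φ μ x r L) hp hpq
    fun π h₁ h₂ => memLp_dist_of_ae_mem_ball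
      (ae_mem_ball_bumpMeasure hφ hr) (ae_mem_ball_flatBumpMeasure hφ hr) h₁ h₂ _
  have hσM : (bumpMeasure φ x r μ univ).toReal ≤ (μ (ball x (3 * r))).toReal :=
    ENNReal.toReal_mono measure_ball_lt_top.ne (bumpMeasure_univ_le hφ hr)
  have he : 0 ≤ 1 / p - 1 / q := sub_nonneg.2 (one_div_le_one_div_of_le hp hpq)
  rw [alphaPVal_eq, alphaPVal_eq]
  generalize (μ (ball x (3 * r))).toReal = M at hσM ⊢
  rcases hσM.trans' ENNReal.toReal_nonneg |>.eq_or_lt with rfl | hM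
  · simp [Real.zero_rpow (inv_ne_zero hp.ne'), Real.zero_rpow (inv_ne_zero (hp.trans_le hpq).ne')]
  calc (r * M ^ (1 / p))⁻¹ * Wasserstein p _ _
      ≤ (r * M ^ (1 / p))⁻¹ * (M ^ (1 / p - 1 / q) * Wasserstein q _ _) := by
        gcongr
        exact hW.trans (by gcongr; exact Wasserstein_nonneg _ _ _)
    _ = (r * M ^ (1 / q))⁻¹ * Wasserstein q _ _ := by
        have : 0 < M ^ (1 / p - 1 / q) := Real.rpow_pos_of_pos hM _
        rw [← sub_add_cancel (1 / p) (1 / q), Real.rpow_add hM, add_sub_cancel_right]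
        field_simp

theorem alphaCoef_eq_zero_of_forall_not (h : ∀ L : AffineSubspace ℝ (Euc d), ¬IsAffinePlane n L) :
    alphaCoef n μ x r = 0 := by
  rw [alphaCoef, ← Real.sInf_empty]
  congr
  exact eq_empty_of_forall_notMem (by rintro _ ⟨c, -, L, hL, -⟩; exact h L hL)

theorem alphaP_eq_zero_of_not_exists (p : ℝ)
    (h : ¬∃ L : AffineSubspace ℝ (Euc d), IsAffinePlane n L ∧
      ((L : Set (Euc d)) ∩ ball x r).Nonempty) :
    alphaP n p φ μ x r = 0 := by
  rw [alphaP, ← Real.sInf_empty]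
  congr
  exact eq_empty_of_forall_notMem (by rintro _ ⟨L, hL, hLB, -⟩; exact h ⟨L, hL, hLB⟩)

theorem alphaCoef_le_alphaVal (hr : 0 < r) {c : ℝ} (hc : 0 ≤ c) (hL : IsAffinePlane n L) :
    alphaCoef n μ x r ≤ alphaVal n μ x r c L :=
  csInf_le ⟨0, by rintro _ ⟨c, -, L', -, rfl⟩; exact alphaVal_nonneg hr c L'⟩ ⟨c, hc, L, hL, rfl⟩

theorem alphaP_le_alphaPVal (hr : 0 < r) (p : ℝ) (hL : IsAffinePlane n L)
    (hLB : ((L : Set (Euc d)) ∩ ball x r).Nonempty) :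
    alphaP n p φ μ x r ≤ alphaPVal n p φ μ x r L :=
  csInf_le ⟨0, by rintro _ ⟨L', -, -, rfl⟩; exact alphaPVal_nonneg hr p L'⟩ ⟨L, hL, hLB, rfl⟩

theorem alphaCoef_le_alphaP_one (hφ : IsBumpFn φ) (hr : 0 < r) [IsLocallyFiniteMeasure μ] :
    alphaCoef n μ x r ≤ alphaP n 1 φ μ x r := by
  by_cases hplane : ∃ L : AffineSubspace ℝ (Euc d), IsAffinePlane n L ∧
      ((L : Set (Euc d)) ∩ ball x r).Nonempty
  · obtain ⟨L₀, hL₀, hL₀B⟩ := hplane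
    refine le_csInf ⟨_, L₀, hL₀, hL₀B, rfl⟩ ?_
    rintro _ ⟨L, hL, hLB, rfl⟩
    exact (alphaCoef_le_alphaVal hr (planeCoef_nonneg hφ) hL).trans
      (alphaVal_planeCoef_le_alphaPVal_one hφ hr hL hLB)
  · -- then there is no `n`-plane at all (its translate through `x` would meet the ball),
    -- so both sides are `sInf ∅ = 0`
    have hnone : ∀ L : AffineSubspace ℝ (Euc d), ¬IsAffinePlane n L := fun L hL =>
      hplane ⟨_, hL.mk' x, x, AffineSubspace.self_mem_mk' x _, mem_ball_self hr⟩
    rw [alphaCoef_eq_zero_of_forall_not hnone, alphaP_eq_zero_of_not_exists 1 hplane]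

theorem alphaP_mono (hφ : IsBumpFn φ) (hr : 0 < r) [IsLocallyFiniteMeasure μ] {p q : ℝ}
    (hp : 0 < p) (hpq : p ≤ q) : alphaP n p φ μ x r ≤ alphaP n q φ μ x r := by
  by_cases hplane : ∃ L : AffineSubspace ℝ (Euc d), IsAffinePlane n L ∧
      ((L : Set (Euc d)) ∩ ball x r).Nonempty
  · obtain ⟨L₀, hL₀, hL₀B⟩ := hplane
    refine le_csInf ⟨_, L₀, hL₀, hL₀B, rfl⟩ ?_
    rintro _ ⟨L, hL, hLB, rfl⟩
    exact (alphaP_le_alphaPVal hr p hL hLB).trans (alphaPVal_le_alphaPVal hφ hr hp hpq L)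
  · rw [alphaP_eq_zero_of_not_exists p hplane, alphaP_eq_zero_of_not_exists q hplane]

end Alpha

theorem statement5_general (n d : ℕ)
    (φ : Euc d → ℝ) (hφ : IsBumpFn φ)
    (μ : Measure (Euc d)) [IsLocallyFiniteMeasure μ]
    (x : Euc d) (r : ℝ) (hr : 0 < r) :
    alphaCoef n μ x r ≤ alphaP n 1 φ μ x r ∧ alphaP n 1 φ μ x r ≤ alphaP n 2 φ μ x r :=
  ⟨alphaCoef_le_alphaP_one hφ hr, alphaP_mono hφ hr one_pos one_le_two⟩

/-- For a Radon measure `μ` and a ball `B` intersecting `supp μ`,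
`α_μ(B) ≤ α_{μ,1}(B) ≤ α_{μ,2}(B)`. -/
theorem statement5 (n d : ℕ) (hn : 1 ≤ n) (hnd : n ≤ d)
    (φ : Euc d → ℝ) (hφ : IsBumpFn φ)
    (μ : Measure (Euc d)) [IsLocallyFiniteMeasure μ]
    (x : Euc d) (r : ℝ) (hr : 0 < r)
    (hB : (ball x r ∩ measureSupport μ).Nonempty) :
    alphaCoef n μ x r ≤ alphaP n 1 φ μ x r ∧ alphaP n 1 φ μ x r ≤ alphaP n 2 φ μ x r :=
  statement5_general n d φ hφ μ x r hr
end
end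

section
/- Let 1 ≤ n ≤ d be integers and C₀ ≥ 1. Let μ be a Radon measure on ℝ^d and B a ball with μ(3B) > 0 and μ(6B) ≤ C₀ μ(3B). Then β_{μ,1}(B) ≤ β_{μ,2}(B), and there exists a constant C depending only on n, d and C₀ such that β_{μ,1}(B) ≤ C α_μ(2B). -/
open MeasureTheory Metric Set

noncomputable section

/-- `μ` is `n`-rectifiable: `μ ≪ H^n` and `μ`-a.a. of the space is covered by countably
many Lipschitz images of `ℝ^n`. -/
def IsNRectifiable {d : ℕ} (n : ℕ) (μ : Measure (Euc d)) : Prop :=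
  μ ≪ μH[(n : ℝ)] ∧
  ∃ f : ℕ → Euc n → Euc d,
    (∀ i, ∃ K : NNReal, LipschitzWith K (f i)) ∧
    μ (Set.univ \ ⋃ i, Set.range (f i)) = 0

/-!
For `β₁ ≤ β₂`, Jensen's inequality for `t ↦ t ^ p` bounds the average of `dist(·, L) / r` over
`B` by its `L^p` average, plane by plane; normalising by `μ(3B) ≥ μ(B)` instead of `μ(B)` only
helps since `p ≥ 1`.

For `β₁ ≲ α(2B)`, fix `c ≥ 0` and an `n`-plane `L`. The 1-Lipschitz function
`min (dist(·, L)) ((3r/2 - |· - x|)⁺)` is supported in `2B` and vanishes on `L`, so it integrates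
to `0` against `c H^n|_L`; hence `∫_B g dμ ≤ F_{2B}(μ, c H^n|_L)` for the truncated distance
`g = min (dist(·, L)) (r/2)`. Pick `z ∈ B` with `μ(B) g(z) ≤ ∫_B g dμ` and let `L'` be the plane
through `z` parallel to `L`. On `B` one has `dist(·, L') ≤ 4 (g + g(z))`, so
`β₁(B) r μ(3B) ≤ ∫_B dist(·, L') dμ ≤ 8 F_{2B}`, and the doubling condition turns this into
`β₁(B) ≤ 16 C₀ α(2B)`.
-/

lemma Submodule.exists_finrank_eq {K E : Type*} [DivisionRing K] [AddCommGroup E] [Module K E]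
    [FiniteDimensional K E] {n : ℕ} (hn : n ≤ Module.finrank K E) :
    ∃ V : Submodule K E, Module.finrank K V = n := by
  let b := Module.finBasis K E
  refine ⟨span K (range (b ∘ Fin.castLE hn)), ?_⟩
  rw [finrank_span_eq_card (b.linearIndependent.comp _ (Fin.castLE_injective hn)),
    Fintype.card_fin]

lemma isAffinePlane_mk' {n d : ℕ} (z : Euc d) {V : Submodule ℝ (Euc d)}
    (hV : Module.finrank ℝ V = n) : IsAffinePlane n (AffineSubspace.mk' z V) :=
  ⟨⟨z, AffineSubspace.self_mem_mk' z V⟩, by rwa [AffineSubspace.direction_mk']⟩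

lemma exists_isAffinePlane_mem {n d : ℕ} (hnd : n ≤ d) (z : Euc d) :
    ∃ L : AffineSubspace ℝ (Euc d), IsAffinePlane n L ∧ z ∈ L := by
  obtain ⟨V, hV⟩ := Submodule.exists_finrank_eq (K := ℝ) (E := Euc d) (by simpa using hnd)
  exact ⟨_, isAffinePlane_mk' z hV, AffineSubspace.self_mem_mk' z V⟩

section AffineSubspace

variable {V P : Type*} [NormedAddCommGroup V] [NormedSpace ℝ V] [MetricSpace P]
  [NormedAddTorsor V P] {L : AffineSubspace ℝ P}

lemma AffineSubspace.infDist_mk'_direction_le (hL : (L : Set P).Nonempty) (y z : P) :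
    infDist y (mk' z L.direction : Set P) ≤ infDist y L + infDist z L := by
  rw [← sub_le_iff_le_add', le_infDist hL]
  intro w hw
  rw [sub_le_iff_le_add', ← sub_le_iff_le_add, le_infDist hL]
  intro p hp
  have hp' : (z -ᵥ w) +ᵥ p ∈ mk' z L.direction := by
    rw [mem_mk', vadd_vsub_assoc, add_comm, vsub_add_vsub_cancel]
    exact L.vsub_mem_direction hp hw
  have := infDist_le_dist_of_mem hp' (x := y)
  have := dist_triangle y p ((z -ᵥ w) +ᵥ p)
  rw [dist_comm p, dist_vadd_left, ← dist_eq_norm_vsub] at this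
  linarith

/-- The factor `4` absorbs the diameter `2r` of `B(x, r)` once a truncated distance reaches
`r / 2`. -/
lemma AffineSubspace.infDist_mk'_direction_le_four_mul (hL : (L : Set P).Nonempty) {x y z : P}
    {r : ℝ} (hy : y ∈ ball x r) (hz : z ∈ ball x r) :
    infDist y (mk' z L.direction : Set P) ≤
      4 * (min (infDist y L) (r / 2) + min (infDist z L) (r / 2)) := by
  have hr : 0 < r := pos_of_mem_ball hy
  have h_parallel := infDist_mk'_direction_le hL y z
  have h_through_z : infDist y (mk' z L.direction : Set P) ≤ dist y z :=
    infDist_le_dist_of_mem (self_mem_mk' z _)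
  have h_diam : dist y z < 2 * r := by
    linarith [dist_triangle_right y z x, mem_ball.1 hy, mem_ball.1 hz]
  have := infDist_nonneg (x := y) (s := (L : Set P))
  have := infDist_nonneg (x := z) (s := (L : Set P))
  rcases le_total (infDist y L) (r / 2) with hyL | hyL <;>
    rcases le_total (infDist z L) (r / 2) with hzL | hzL <;>
    simp only [min_eq_left, min_eq_right, hyL, hzL] <;> linarith

end AffineSubspace

lemma AffineSubspace.hausdorffMeasure_inter_lt_top {E : Type*} [NormedAddCommGroup E]
    [NormedSpace ℝ E] [FiniteDimensional ℝ E] [MeasurableSpace E] [BorelSpace E]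
    (L : AffineSubspace ℝ E) {s : Set E} (hs : Bornology.IsBounded s) :
    μH[(Module.finrank ℝ L.direction : ℝ)] ((L : Set E) ∩ s) < ⊤ := by
  rcases (L : Set E).eq_empty_or_nonempty with hL | ⟨p, hp⟩
  · simp [hL]
  let f : L.direction → E := fun v => (v : E) + p
  have hf : Isometry f := Isometry.of_dist_eq fun v w => by simp [f, dist_eq_norm]
  obtain ⟨R, hR⟩ := hs.subset_closedBall p
  have h_sub : (L : Set E) ∩ s ⊆ f '' closedBall 0 R := by
    rintro q ⟨hqL, hqs⟩
    refine ⟨⟨q - p, L.vsub_mem_direction hqL hp⟩, ?_, by simp [f]⟩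
    simpa [dist_eq_norm] using hR hqs
  calc μH[(Module.finrank ℝ L.direction : ℝ)] ((L : Set E) ∩ s)
      ≤ μH[(Module.finrank ℝ L.direction : ℝ)] (f '' closedBall 0 R) := measure_mono h_sub
    _ = μH[(Module.finrank ℝ L.direction : ℝ)] (closedBall (0 : L.direction) R) :=
      hf.hausdorffMeasure_image (Or.inl (Nat.cast_nonneg _)) _
    _ < ⊤ := isBounded_closedBall.measure_lt_top

lemma flatMeasure_ball_ne_top {n d : ℕ} {L : AffineSubspace ℝ (Euc d)} (hL : IsAffinePlane n L)
    (c : ℝ) (x : Euc d) (R : ℝ) : flatMeasure n c L (ball x R) ≠ ⊤ := by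
  rw [flatMeasure, Measure.smul_apply, Measure.restrict_apply measurableSet_ball, smul_eq_mul,
    inter_comm, ← hL.2]
  exact ENNReal.mul_ne_top ENNReal.ofReal_ne_top
    (L.hausdorffMeasure_inter_lt_top isBounded_ball).ne

lemma Continuous.integrableOn_ball {X : Type*} [MetricSpace X] [ProperSpace X]
    [MeasurableSpace X] [BorelSpace X] {μ : Measure X} [IsLocallyFiniteMeasure μ] {f : X → ℝ}
    (hf : Continuous f) (x : X) (r : ℝ) : IntegrableOn f (ball x r) μ :=
  (hf.continuousOn.integrableOn_compact (isCompact_closedBall x r)).mono_set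
    ball_subset_closedBall

lemma exists_mem_measureReal_mul_le_setIntegral {α : Type*} [MeasurableSpace α]
    {μ : Measure α} {s : Set α} {g : α → ℝ} (hs : s.Nonempty) (hμs : μ s ≠ ⊤)
    (hg : IntegrableOn g s μ) : ∃ z ∈ s, μ.real s * g z ≤ ∫ y in s, g y ∂μ := by
  rcases eq_or_ne (μ s) 0 with h0 | h0
  · obtain ⟨z, hz⟩ := hs
    exact ⟨z, hz, by simp [Measure.real, h0, Measure.restrict_eq_zero.2 h0]⟩
  · obtain ⟨z, hz, hgz⟩ := exists_le_setAverage h0 hμs hg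
    refine ⟨z, hz, ?_⟩
    rwa [setAverage_eq, smul_eq_mul, ← div_eq_inv_mul,
      le_div_iff₀' (show 0 < μ.real s from ENNReal.toReal_pos h0 hμs)] at hgz

lemma LipschitzWith.abs_le_of_tsupport_subset_ball {E : Type*} [NormedAddCommGroup E]
    [NormedSpace ℝ E] [Nontrivial E] {φ : E → ℝ} (hφ : LipschitzWith 1 φ) {x : E} {R : ℝ}
    (hsupp : tsupport φ ⊆ ball x R) {y : E} (hy : y ∈ ball x R) : |φ y| ≤ 2 * R := by
  obtain ⟨v, hv⟩ := exists_norm_eq E (by linarith [pos_of_mem_ball hy] : 0 ≤ 2 * R)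
  have h_out : y + v ∉ ball x R := by
    rw [mem_ball, not_lt]
    have := dist_triangle (y + v) x y
    rw [dist_self_add_left, hv] at this
    linarith [mem_ball'.1 hy]
  have h_zero : φ (y + v) = 0 := image_eq_zero_of_notMem_tsupport fun h => h_out (hsupp h)
  simpa [h_zero, Real.dist_eq, dist_self_add_right, hv] using hφ.dist_le_mul y (y + v)

lemma abs_integral_le_of_mem_Lip1 {d : ℕ} [NeZero d] {ρ : Measure (Euc d)} {x : Euc d}
    {R : ℝ} (hρ : ρ (ball x R) ≠ ⊤) {φ : Euc d → ℝ} (hφ : φ ∈ Lip1 (ball x R)) :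
    |∫ y, φ y ∂ρ| ≤ 2 * R * ρ.real (ball x R) := by
  rw [← setIntegral_eq_integral_of_forall_compl_eq_zero fun y hy =>
    image_eq_zero_of_notMem_tsupport fun h => hy (hφ.2 h), ← Real.norm_eq_abs]
  exact norm_setIntegral_le_of_norm_le_const hρ.lt_top fun y hy =>
    (Real.norm_eq_abs _).trans_le (hφ.1.abs_le_of_tsupport_subset_ball hφ.2 hy)

lemma le_Fdist {d : ℕ} [NeZero d] {μ ν : Measure (Euc d)} {x : Euc d} {R : ℝ}
    (hμ : μ (ball x R) ≠ ⊤) (hν : ν (ball x R) ≠ ⊤) {φ : Euc d → ℝ}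
    (hφ : φ ∈ Lip1 (ball x R)) : |∫ y, φ y ∂μ - ∫ y, φ y ∂ν| ≤ Fdist (ball x R) μ ν := by
  refine le_csSup ⟨2 * R * μ.real (ball x R) + 2 * R * ν.real (ball x R), ?_⟩ ⟨φ, hφ, rfl⟩
  rintro t ⟨ψ, hψ, rfl⟩
  exact (abs_sub _ _).trans
    (add_le_add (abs_integral_le_of_mem_Lip1 hμ hψ) (abs_integral_le_of_mem_Lip1 hν hψ))

lemma setIntegral_min_infDist_le_Fdist {n d : ℕ} [NeZero d] (μ : Measure (Euc d))
    [IsLocallyFiniteMeasure μ] (x : Euc d) {r : ℝ} (hr : 0 < r) (c : ℝ)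
    {L : AffineSubspace ℝ (Euc d)} (hL : IsAffinePlane n L) :
    ∫ y in ball x r, min (infDist y L) (r / 2) ∂μ ≤
      Fdist (ball x (2 * r)) μ (flatMeasure n c L) := by
  let φ : Euc d → ℝ := fun y => min (infDist y L) (max (3 / 2 * r - dist y x) 0)
  have hφ_nonneg : ∀ y, 0 ≤ φ y := fun y => le_min infDist_nonneg (le_max_right _ _)
  have hφ_lip : LipschitzWith 1 φ := by
    have h_bump : LipschitzWith 1 fun y => 3 / 2 * r - dist y x :=
      LipschitzWith.of_le_add fun y z => by linarith [dist_triangle z y x, dist_comm y z]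
    simpa using (lipschitz_infDist_pt (L : Set (Euc d))).min (h_bump.max_const 0)
  have hφ_out : ∀ y ∉ closedBall x (3 / 2 * r), φ y = 0 := fun y hy => by
    rw [mem_closedBall, not_le] at hy
    exact le_antisymm (min_le_of_right_le (max_le (by linarith) le_rfl)) (hφ_nonneg y)
  have hφ_supp : Function.support φ ⊆ closedBall x (3 / 2 * r) := fun y hy =>
    by_contra fun h => hy (hφ_out y h)
  have hφ_mem : φ ∈ Lip1 (ball x (2 * r)) :=
    ⟨hφ_lip, (closure_minimal hφ_supp isClosed_closedBall).trans
      (closedBall_subset_ball (by linarith : 3 / 2 * r < 2 * r))⟩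
  have hφ_int : Integrable φ μ := hφ_lip.continuous.integrable_of_hasCompactSupport
    (HasCompactSupport.intro (isCompact_closedBall x (3 / 2 * r)) hφ_out)
  have hφ_flat : ∫ y, φ y ∂(flatMeasure n c L) = 0 := by
    rw [flatMeasure, integral_smul_measure, setIntegral_eq_zero_of_forall_eq_zero
      fun y hy => by simp [φ, infDist_zero_of_mem hy], smul_zero]
  have hφ_ge : ∀ y ∈ ball x r, min (infDist y L) (r / 2) ≤ φ y := fun y hy =>
    min_le_min_left _ (le_max_of_le_left (by linarith [mem_ball.1 hy]))
  calc ∫ y in ball x r, min (infDist y L) (r / 2) ∂μ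
      ≤ ∫ y in ball x r, φ y ∂μ :=
        setIntegral_mono_on (((continuous_infDist_pt _).min continuous_const).integrableOn_ball
          x r) hφ_int.integrableOn measurableSet_ball hφ_ge
    _ ≤ ∫ y, φ y ∂μ := setIntegral_le_integral hφ_int (ae_of_all _ hφ_nonneg)
    _ = |∫ y, φ y ∂μ - ∫ y, φ y ∂(flatMeasure n c L)| := by
        rw [hφ_flat, sub_zero, abs_of_nonneg (integral_nonneg hφ_nonneg)]
    _ ≤ _ := le_Fdist measure_ball_lt_top.ne (flatMeasure_ball_ne_top hL c x _) hφ_mem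

section Beta

variable {d : ℕ} {μ : Measure (Euc d)} {x : Euc d} {r : ℝ}

lemma betaVal_one (L : AffineSubspace ℝ (Euc d)) :
    betaVal 1 μ x r L = (μ.real (ball x (3 * r)))⁻¹ * ∫ y in ball x r, infDist y L / r ∂μ := by
  simp [betaVal, Measure.real]

lemma betaVal_nonneg (p : ℝ) (hr : 0 ≤ r) (L : AffineSubspace ℝ (Euc d)) :
    0 ≤ betaVal p μ x r L :=
  Real.rpow_nonneg (mul_nonneg (inv_nonneg.2 ENNReal.toReal_nonneg)
    (setIntegral_nonneg measurableSet_ball fun _ _ =>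
      Real.rpow_nonneg (div_nonneg infDist_nonneg hr) p)) _

lemma betaCoef_le_betaVal {n : ℕ} {p : ℝ} (hr : 0 ≤ r) {L : AffineSubspace ℝ (Euc d)}
    (hL : IsAffinePlane n L) (hLx : ((L : Set (Euc d)) ∩ ball x r).Nonempty) :
    betaCoef n p μ x r ≤ betaVal p μ x r L :=
  csInf_le ⟨0, by rintro b ⟨L, -, -, rfl⟩; exact betaVal_nonneg p hr L⟩ ⟨L, hL, hLx, rfl⟩

lemma betaCoef_nonneg (n : ℕ) (p : ℝ) (hr : 0 ≤ r) : 0 ≤ betaCoef n p μ x r :=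
  Real.sInf_nonneg <| by rintro b ⟨L, -, -, rfl⟩; exact betaVal_nonneg p hr L

lemma betaVal_one_le_betaVal [IsLocallyFiniteMeasure μ] {p : ℝ} (hp : 1 ≤ p) (hr : 0 < r)
    (L : AffineSubspace ℝ (Euc d)) : betaVal 1 μ x r L ≤ betaVal p μ x r L := by
  set f : Euc d → ℝ := fun y => infDist y L / r
  have hf_nonneg : ∀ y, 0 ≤ f y := fun y => div_nonneg infDist_nonneg hr.le
  have hf_cont : Continuous f := (continuous_infDist_pt _).div_const r
  rw [betaVal_one]
  rcases eq_or_ne (μ (ball x r)) 0 with h0 | h0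
  · rw [Measure.restrict_eq_zero.2 h0, integral_zero_measure, mul_zero]
    exact betaVal_nonneg p hr.le L
  set m := μ.real (ball x r)
  set c := μ.real (ball x (3 * r))
  have hm : 0 < m := ENNReal.toReal_pos h0 measure_ball_lt_top.ne
  have hmc : m ≤ c := measureReal_mono (ball_subset_ball (by linarith)) measure_ball_lt_top.ne
  have h_jensen : (m⁻¹ * ∫ y in ball x r, f y ∂μ) ^ p ≤ m⁻¹ * ∫ y in ball x r, f y ^ p ∂μ := by
    simpa [setAverage_eq] using (convexOn_rpow hp).map_set_average_le
      (continuousOn_id.rpow_const fun _ _ => Or.inr (by linarith)) isClosed_Ici h0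
      measure_ball_lt_top.ne (ae_of_all _ hf_nonneg) (hf_cont.integrableOn_ball x r)
      ((hf_cont.rpow_const fun _ => Or.inr (by linarith)).integrableOn_ball x r)
  have ha : c⁻¹ * m ≤ 1 := inv_mul_le_one_of_le₀ hmc (hm.le.trans hmc)
  have hA : 0 ≤ m⁻¹ * ∫ y in ball x r, f y ∂μ :=
    mul_nonneg (inv_nonneg.2 hm.le) (setIntegral_nonneg measurableSet_ball fun y _ => hf_nonneg y)
  have hQ : 0 ≤ ∫ y in ball x r, f y ^ p ∂μ :=
    setIntegral_nonneg measurableSet_ball fun y _ => Real.rpow_nonneg (hf_nonneg y) p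
  calc c⁻¹ * ∫ y in ball x r, f y ∂μ = (c⁻¹ * m) * (m⁻¹ * ∫ y in ball x r, f y ∂μ) := by
        field_simp
    _ ≤ ((c⁻¹ * m) * (m⁻¹ * ∫ y in ball x r, f y ^ p ∂μ)) ^ p⁻¹ := by
        rw [Real.le_rpow_inv_iff_of_pos (by positivity) (by positivity) (by linarith),
          Real.mul_rpow (by positivity) hA]
        exact mul_le_mul (Real.rpow_le_self_of_le_one (by positivity) ha hp) h_jensen
          (by positivity) (by positivity)
    _ = betaVal p μ x r L := by
        rw [betaVal, one_div]
        congr 1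
        field_simp
        rfl

end Beta

section Alpha

variable {n d : ℕ} [NeZero d] (μ : Measure (Euc d)) [IsLocallyFiniteMeasure μ] {x : Euc d}
  {r : ℝ}

lemma betaCoef_one_mul_le_Fdist (hr : 0 < r) (hμ : 0 < μ (ball x (3 * r))) (c : ℝ)
    {L : AffineSubspace ℝ (Euc d)} (hL : IsAffinePlane n L) :
    betaCoef n 1 μ x r * (r * μ.real (ball x (3 * r))) ≤
      8 * Fdist (ball x (2 * r)) μ (flatMeasure n c L) := by
  set g : Euc d → ℝ := fun y => min (infDist y L) (r / 2)
  have hg_int : IntegrableOn g (ball x r) μ :=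
    ((continuous_infDist_pt _).min continuous_const).integrableOn_ball x r
  obtain ⟨z, hz, hgz⟩ := exists_mem_measureReal_mul_le_setIntegral (nonempty_ball.2 hr)
    measure_ball_lt_top.ne hg_int
  set L' := AffineSubspace.mk' z L.direction
  have h_dist : ∫ y in ball x r, infDist y L' ∂μ ≤ 8 * ∫ y in ball x r, g y ∂μ :=
    calc ∫ y in ball x r, infDist y L' ∂μ ≤ ∫ y in ball x r, 4 * (g y + g z) ∂μ :=
          setIntegral_mono_on ((continuous_infDist_pt _).integrableOn_ball x r)
            ((hg_int.add (integrableOn_const measure_ball_lt_top.ne)).const_mul 4)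
            measurableSet_ball fun y hy => L.infDist_mk'_direction_le_four_mul hL.1 hy hz
      _ = 4 * (∫ y in ball x r, g y ∂μ) + 4 * (μ.real (ball x r) * g z) := by
          rw [integral_const_mul, integral_add hg_int (integrableOn_const measure_ball_lt_top.ne),
            setIntegral_const, smul_eq_mul, mul_add]
      _ ≤ 8 * ∫ y in ball x r, g y ∂μ := by linarith
  have h3 : 0 < μ.real (ball x (3 * r)) := ENNReal.toReal_pos hμ.ne' measure_ball_lt_top.ne
  calc betaCoef n 1 μ x r * (r * μ.real (ball x (3 * r)))
      ≤ betaVal 1 μ x r L' * (r * μ.real (ball x (3 * r))) := by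
        gcongr
        exact betaCoef_le_betaVal hr.le (isAffinePlane_mk' z hL.2)
          ⟨z, AffineSubspace.self_mem_mk' z _, hz⟩
    _ = ∫ y in ball x r, infDist y L' ∂μ := by
        rw [betaVal_one, integral_div]
        field_simp
    _ ≤ 8 * Fdist (ball x (2 * r)) μ (flatMeasure n c L) := by
        linarith [setIntegral_min_infDist_le_Fdist μ x hr c hL]

lemma betaCoef_one_le_mul_alphaVal (hr : 0 < r) (hμ : 0 < μ (ball x (3 * r))) {C₀ : ℝ}
    (h_doubling : μ.real (ball x (6 * r)) ≤ C₀ * μ.real (ball x (3 * r))) {c : ℝ}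
    {L : AffineSubspace ℝ (Euc d)} (hL : IsAffinePlane n L) :
    betaCoef n 1 μ x r ≤ 16 * C₀ * alphaVal n μ x (2 * r) c L := by
  have h3 : 0 < μ.real (ball x (3 * r)) := ENNReal.toReal_pos hμ.ne' measure_ball_lt_top.ne
  have h6 : 0 < μ.real (ball x (6 * r)) := h3.trans_le <|
    measureReal_mono (ball_subset_ball (by linarith)) measure_ball_lt_top.ne
  have hC₀ : 0 < C₀ := pos_of_mul_pos_left (h6.trans_le h_doubling) h3.le
  rw [alphaVal, show 3 * (2 * r) = 6 * r by ring, mul_div_assoc', le_div_iff₀ (by positivity)]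
  calc betaCoef n 1 μ x r * (2 * r * (μ (ball x (6 * r))).toReal)
      ≤ betaCoef n 1 μ x r * (2 * r * (C₀ * μ.real (ball x (3 * r)))) := by
        gcongr
        · exact betaCoef_nonneg n 1 hr.le
        · exact h_doubling
    _ = 2 * C₀ * (betaCoef n 1 μ x r * (r * μ.real (ball x (3 * r)))) := by ring
    _ ≤ 2 * C₀ * (8 * Fdist (ball x (2 * r)) μ (flatMeasure n c L)) :=
        mul_le_mul_of_nonneg_left (betaCoef_one_mul_le_Fdist μ hr hμ c hL) (by positivity)
    _ = 16 * C₀ * Fdist (ball x (2 * r)) μ (flatMeasure n c L) := by ring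

end Alpha

/-- If `μ(3B) > 0` and `μ(6B) ≤ C₀ μ(3B)`, then `β_{μ,1}(B) ≤ β_{μ,2}(B)`
and `β_{μ,1}(B) ≤ C α_μ(2B)` for some `C = C(n,d,C₀)`. -/
theorem statement6 (n d : ℕ) (hn : 1 ≤ n) (hnd : n ≤ d) (C₀ : ℝ) (hC₀ : 1 ≤ C₀) :
    ∃ C > (0 : ℝ), ∀ (μ : Measure (Euc d)), IsLocallyFiniteMeasure μ →
      ∀ (x : Euc d) (r : ℝ), 0 < r →
        0 < μ (ball x (3 * r)) →
        μ (ball x (6 * r)) ≤ ENNReal.ofReal C₀ * μ (ball x (3 * r)) →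
        betaCoef n 1 μ x r ≤ betaCoef n 2 μ x r ∧
        betaCoef n 1 μ x r ≤ C * alphaCoef n μ x (2 * r) := by
  refine ⟨16 * C₀, by positivity, fun μ _ x r hr hμ h_doubling => ?_⟩
  have : NeZero d := ⟨by omega⟩
  obtain ⟨L₀, hL₀, hxL₀⟩ := exists_isAffinePlane_mem hnd x
  have hμ_doubling : μ.real (ball x (6 * r)) ≤ C₀ * μ.real (ball x (3 * r)) := by
    simpa [Measure.real, ENNReal.toReal_mul, ENNReal.toReal_ofReal (by linarith : 0 ≤ C₀)] using
      ENNReal.toReal_mono (ENNReal.mul_ne_top ENNReal.ofReal_ne_top measure_ball_lt_top.ne)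
        h_doubling
  constructor
  · refine le_csInf ⟨_, L₀, hL₀, ⟨x, hxL₀, mem_ball_self hr⟩, rfl⟩ ?_
    rintro _ ⟨L, hL, hLx, rfl⟩
    exact (betaCoef_le_betaVal hr.le hL hLx).trans (betaVal_one_le_betaVal one_le_two hr L)
  · rw [← div_le_iff₀' (by positivity)]
    refine le_csInf ⟨_, 0, le_rfl, L₀, hL₀, rfl⟩ ?_
    rintro _ ⟨c, -, L, hL, rfl⟩
    rw [div_le_iff₀' (by positivity)]
    exact betaCoef_one_le_mul_alphaVal μ hr hμ hμ_doubling hL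
end
end
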